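/- arXiv:2603.16308 — 6 statements merged into one kernel-verified Lean document; each statement's English description precedes it below -/
import Mathlib

section
/- For every natural number n ≥ 1 there exists an L_{conv,≤}-sentence σ such that 𝔐^n ⊨ σ but 𝔐^{n+1} ⊭ σ; consequently the first-order theory of 𝔐^n is different from the first-order theory of 𝔐^{n+1}. -/
open FirstOrder

/-- A rational open half-space in ℝ^n: `{x | c·x < d}` with `c ∈ ℚ^n` nonzero, `d ∈ ℚ`. -/
def IsRatHalfSpace (n : ℕ) (s : Set (Fin n → ℝ)) : Prop :=
  ∃ (c : Fin n → ℚ) (d : ℚ), c ≠ 0 ∧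
    s = {x : Fin n → ℝ | (∑ i, (c i : ℝ) * x i) < (d : ℝ)}

/-- Membership in the Boolean subalgebra `ROQ(ℝ^n)` of the Boolean algebra of regular open
sets generated by the rational open half-spaces, with Boolean operations
`a·b = a ∩ b`, `a + b = int(cl(a ∪ b))`, `-a = int(ℝ^n ∖ a)`, `0 = ∅`, `1 = univ`. -/
inductive InROQ (n : ℕ) : Set (Fin n → ℝ) → Prop
  | bot : InROQ n ∅
  | top : InROQ n Set.univ
  | halfspace (s : Set (Fin n → ℝ)) : IsRatHalfSpace n s → InROQ n s
  | inf (s t : Set (Fin n → ℝ)) : InROQ n s → InROQ n t → InROQ n (s ∩ t)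
  | sup (s t : Set (Fin n → ℝ)) : InROQ n s → InROQ n t →
      InROQ n (interior (closure (s ∪ t)))
  | compl (s : Set (Fin n → ℝ)) : InROQ n s → InROQ n (interior sᶜ)

/-- `ROQ(ℝ^n)` as a set of subsets of ℝ^n. -/
def ROQ (n : ℕ) : Set (Set (Fin n → ℝ)) := {s | InROQ n s}

/-- The domain of the structure 𝔐^n: the regular open rational polytopes. -/
def ROQel (n : ℕ) : Type := {s : Set (Fin n → ℝ) // InROQ n s}

/-- Relation symbols of the language L_{conv,≤}: one unary (`conv`), one binary (`≤`). -/
def LconvRel : ℕ → Type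
  | 1 => Unit
  | 2 => Unit
  | _ => Empty

/-- The first-order language L_{conv,≤} with no function symbols, a unary relation symbol
`conv` and a binary relation symbol `≤`. -/
def Lconv : Language := ⟨fun _ => Empty, LconvRel⟩

/-- The structure 𝔐^n: domain ROQ(ℝ^n), `≤` interpreted as inclusion and `conv`
as convexity. -/
instance MStructure (n : ℕ) : Lconv.Structure (ROQel n) where
  funMap := fun f _ => f.elim
  RelMap := fun {k} r v =>
    match k, r, v with
    | 1, _, v => Convex ℝ (v 0).1
    | 2, _, v => (v 0).1 ⊆ (v 1).1
    | 0, r, _ => r.elim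
    | (_ + 3), r, _ => r.elim


/-!
Helly's theorem can be written as an `L_{conv,≤}`-sentence: in `ROQ(ℝ^m)` a family has a
nonzero common lower bound iff its intersection is nonempty, since finite intersections of
regular open rational polytopes are again such polytopes. With `m + 2` sets the sentence holds in
`ℝ^m` by Helly's theorem, and it fails in `ℝ^(m+1)`: the `m + 2` open half-spaces lying outside
the facets of the standard simplex have empty intersection, while any `m + 1` of them meet.
-/

open Language Finset

def leR : Lconv.Relations 2 := ()

def convR : Lconv.Relations 1 := ()

/-- `∃ y z, (∀ i ∈ s, y ≤ x i) ∧ ¬ y ≤ z` -/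
noncomputable def commonNonzeroLowerBound {k : ℕ} (s : Finset (Fin k)) :
    Lconv.Formula (Fin k) :=
  Formula.iExs (Fin 2)
    (Formula.iInf (fun i : s => leR.formula₂ (Term.var (Sum.inr 0)) (Term.var (Sum.inl i.1))) ⊓
      ∼(leR.formula₂ (Term.var (Sum.inr 0)) (Term.var (Sum.inr 1))))

noncomputable def hellySentence (k : ℕ) : Lconv.Sentence :=
  Formula.iAlls (Fin k)
    (Formula.relabel (Sum.inr : Fin k → Empty ⊕ Fin k)
      ((Formula.iInf (fun i : Fin k => convR.formula₁ (Term.var i)) ⊓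
          Formula.iInf fun j : Fin k => commonNonzeroLowerBound (univ.erase j)).imp
        (commonNonzeroLowerBound univ)))

@[simp] lemma relMap_leR {m : ℕ} (v : Fin 2 → ROQel m) :
    Structure.RelMap leR v ↔ (v 0).1 ⊆ (v 1).1 := Iff.rfl

@[simp] lemma relMap_convR {m : ℕ} (v : Fin 1 → ROQel m) :
    Structure.RelMap convR v ↔ Convex ℝ (v 0).1 := Iff.rfl

lemma InROQ.biInter {m : ℕ} {ι : Type*} {F : ι → Set (Fin m → ℝ)} (s : Finset ι)
    (hF : ∀ i ∈ s, InROQ m (F i)) : InROQ m (⋂ i ∈ s, F i) := by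
  classical
  induction s using Finset.induction with
  | empty => simpa using InROQ.top
  | insert a s _ ih =>
    rw [set_biInter_insert]
    exact .inf _ _ (hF a (mem_insert_self a s)) (ih fun i hi => hF i (mem_insert_of_mem hi))

lemma exists_nonzero_lowerBound_iff {m k : ℕ} (a : Fin k → ROQel m) (s : Finset (Fin k)) :
    (∃ p : Fin 2 → ROQel m, (∀ i ∈ s, (p 0).1 ⊆ (a i).1) ∧ ¬ (p 0).1 ⊆ (p 1).1) ↔
      (⋂ i ∈ s, (a i).1).Nonempty := by
  constructor
  · rintro ⟨p, hp, hp0⟩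
    obtain ⟨x, hx, -⟩ := Set.not_subset.1 hp0
    exact ⟨x, Set.mem_iInter₂.2 fun i hi => hp i hi hx⟩
  · intro hne
    refine ⟨![⟨_, InROQ.biInter s fun i _ => (a i).2⟩, ⟨∅, .bot⟩], fun i hi => ?_, ?_⟩
    · exact Set.biInter_subset_of_mem hi
    · simpa [Set.subset_empty_iff, ← Set.nonempty_iff_ne_empty] using hne

lemma realize_commonNonzeroLowerBound {m k : ℕ} (a : Fin k → ROQel m) (s : Finset (Fin k)) :
    (commonNonzeroLowerBound s).Realize a ↔ (⋂ i ∈ s, (a i).1).Nonempty := by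
  rw [← exists_nonzero_lowerBound_iff]
  simp only [commonNonzeroLowerBound, Formula.realize_iExs, Formula.realize_inf,
    Formula.realize_iInf, Formula.realize_not, Formula.realize_rel₂, Term.realize_var]
  simp

lemma realize_hellySentence {m k : ℕ} :
    ROQel m ⊨ hellySentence k ↔
      ∀ a : Fin k → ROQel m, (∀ i, Convex ℝ (a i).1) →
        (∀ j, (⋂ i ∈ univ.erase j, (a i).1).Nonempty) → (⋂ i, (a i).1).Nonempty := by
  simp only [hellySentence, Sentence.Realize, Formula.realize_iAlls, Formula.realize_relabel,
    Formula.realize_imp, Formula.realize_inf, Formula.realize_iInf, Formula.realize_rel₁,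
    Term.realize_var, realize_commonNonzeroLowerBound]
  simp

section Helly

variable {ι 𝕜 E : Type*} [Fintype ι] [DecidableEq ι]
  [Field 𝕜] [LinearOrder 𝕜] [IsStrictOrderedRing 𝕜] [AddCommGroup E] [Module 𝕜 E] [FiniteDimensional 𝕜 E]

theorem Convex.nonempty_iInter_of_forall_erase {F : ι → Set E} (hconv : ∀ i, Convex 𝕜 (F i))
    (hcard : Module.finrank 𝕜 E + 1 < Fintype.card ι)
    (hF : ∀ j, (⋂ i ∈ univ.erase j, F i).Nonempty) : (⋂ i, F i).Nonempty := by
  simpa using Convex.helly_theorem' (s := univ) (fun i _ => hconv i) fun I _ hI => by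
    have hI : I ≠ univ := by
      rintro rfl
      rw [card_univ] at hI
      omega
    obtain ⟨j, -, hj⟩ := exists_of_ssubset (ssubset_univ_iff.2 hI)
    exact (hF j).mono (Set.biInter_subset_biInter_left fun i hi =>
      mem_erase.2 ⟨by rintro rfl; exact hj hi, mem_univ i⟩)

end Helly

theorem IsRatHalfSpace.convex {m : ℕ} {s : Set (Fin m → ℝ)} (hs : IsRatHalfSpace m s) :
    Convex ℝ s := by
  obtain ⟨c, d, -, rfl⟩ := hs
  exact convex_halfSpace_lt ⟨fun x y => by simp [mul_add, sum_add_distrib],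
    fun r x => by simp [mul_sum, mul_left_comm]⟩ _

def simplexOuterHalfSpace (m : ℕ) : Fin (m + 1) → Set (Fin m → ℝ) :=
  Fin.lastCases {x | 1 < ∑ i, x i} fun i => {x | x i < 0}

theorem isRatHalfSpace_simplexOuterHalfSpace (m : ℕ) (j : Fin (m + 2)) :
    IsRatHalfSpace (m + 1) (simplexOuterHalfSpace (m + 1) j) := by
  induction j using Fin.lastCases with
  | last =>
    refine ⟨-1, -1, neg_ne_zero.2 one_ne_zero, ?_⟩
    ext x
    simp [simplexOuterHalfSpace, neg_lt_neg_iff]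
  | cast i =>
    refine ⟨Pi.single i 1, 0, by simp, ?_⟩
    ext x
    simp [simplexOuterHalfSpace, Pi.single_apply, apply_ite (Rat.cast : ℚ → ℝ), ite_mul]

theorem iInter_simplexOuterHalfSpace (m : ℕ) : ⋂ j, simplexOuterHalfSpace m j = ∅ := by
  refine Set.eq_empty_of_forall_notMem fun x hx => ?_
  rw [Set.mem_iInter] at hx
  have hsum : 1 < ∑ i, x i := by simpa [simplexOuterHalfSpace] using hx (Fin.last m)
  have hneg : ∀ i, x i < 0 := fun i => by simpa [simplexOuterHalfSpace] using hx i.castSucc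
  linarith [sum_nonpos fun i (_ : i ∈ univ) => (hneg i).le]

theorem nonempty_biInter_erase_simplexOuterHalfSpace (m : ℕ) (j : Fin (m + 1)) :
    (⋂ i ∈ univ.erase j, simplexOuterHalfSpace m i).Nonempty := by
  induction j using Fin.lastCases with
  | last =>
    refine ⟨-1, Set.mem_iInter₂.2 fun i hi => ?_⟩
    induction i using Fin.lastCases with
    | last => simp at hi
    | cast i => simp [simplexOuterHalfSpace]
  | cast j =>
    -- the point `(m + 2) e_j - 𝟙` has coordinate sum `2`
    refine ⟨Pi.single j (m + 2) - 1, Set.mem_iInter₂.2 fun i hi => ?_⟩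
    induction i using Fin.lastCases with
    | last => simp [simplexOuterHalfSpace, sum_sub_distrib]
    | cast i =>
      have : i ≠ j := fun h => by simp [h] at hi
      simp [simplexOuterHalfSpace, this]

theorem realize_hellySentence_add_two (m : ℕ) : ROQel m ⊨ hellySentence (m + 2) :=
  realize_hellySentence.2 fun _ hconv hF =>
    Convex.nonempty_iInter_of_forall_erase hconv (by simp) hF

theorem not_realize_hellySentence_add_two (m : ℕ) : ¬ ROQel (m + 1) ⊨ hellySentence (m + 2) := by
  rw [realize_hellySentence]
  intro helly
  have hne := helly (fun j => ⟨_, .halfspace _ (isRatHalfSpace_simplexOuterHalfSpace m j)⟩)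
    (fun j => (isRatHalfSpace_simplexOuterHalfSpace m j).convex)
    (nonempty_biInter_erase_simplexOuterHalfSpace (m + 1))
  rw [iInter_simplexOuterHalfSpace] at hne
  exact Set.not_nonempty_empty hne

theorem theories_differ_general (n : ℕ) :
    (∃ σ : Lconv.Sentence, (ROQel n ⊨ σ) ∧ ¬ (ROQel (n + 1) ⊨ σ)) ∧
      Lconv.completeTheory (ROQel n) ≠ Lconv.completeTheory (ROQel (n + 1)) := by
  have htrue := realize_hellySentence_add_two n
  have hfalse := not_realize_hellySentence_add_two n
  refine ⟨⟨_, htrue, hfalse⟩, fun h => hfalse ?_⟩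
  rwa [← mem_completeTheory, ← h, mem_completeTheory]

/-- For every n ≥ 1 there is an L_{conv,≤}-sentence true in 𝔐^n but false in 𝔐^{n+1};
consequently the theories of 𝔐^n and 𝔐^{n+1} differ. -/
theorem theories_differ (n : ℕ) (hn : 1 ≤ n) :
    (∃ σ : Lconv.Sentence, (ROQel n ⊨ σ) ∧ ¬ (ROQel (n + 1) ⊨ σ)) ∧
      Lconv.completeTheory (ROQel n) ≠ Lconv.completeTheory (ROQel (n + 1)) :=
  theories_differ_general n
end

section
/- For every n ≥ 1 there exist n+2 rational open half-spaces h_1, …, h_{n+2} in ℝ^{n+1} such that every (n+1)-element subfamily of {h_1, …, h_{n+2}} has nonempty intersection, but h_1 ∩ … ∩ h_{n+2} = ∅. (This witnesses the failure in 𝔐^{n+1} of the Helly sentence that holds in 𝔐^n.) -/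
open FirstOrder

namespace HellyHalfSpace

variable {m : ℕ}

def family (m : ℕ) : Fin (m + 1) → Set (Fin m → ℝ) :=
  Fin.lastCases {x | ∑ i, x i < 0} fun i => {x | 0 < x i}

theorem isRatHalfSpace_coord_pos (i : Fin m) : IsRatHalfSpace m {x | 0 < x i} := by
  refine ⟨-Pi.single i 1, 0, neg_ne_zero.2 (Pi.single_ne_zero_iff.2 one_ne_zero), ?_⟩
  ext x
  simp [Pi.single_apply, apply_ite, ite_mul]

theorem isRatHalfSpace_sum_neg [NeZero m] : IsRatHalfSpace m {x | ∑ i, x i < 0} :=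
  ⟨1, 0, one_ne_zero, by simp⟩

theorem isRatHalfSpace_family [NeZero m] (i : Fin (m + 1)) : IsRatHalfSpace m (family m i) := by
  induction i using Fin.lastCases with
  | last => simpa [family] using isRatHalfSpace_sum_neg
  | cast i => simpa [family] using isRatHalfSpace_coord_pos i

theorem iInter_family_eq_empty : ⋂ i, family m i = ∅ := by
  refine Set.eq_empty_of_forall_notMem fun x hx => ?_
  have hx_pos (k : Fin m) : 0 < x k := by simpa [family] using Set.mem_iInter.1 hx k.castSucc
  have hsum_neg : ∑ k, x k < 0 := by simpa [family] using Set.mem_iInter.1 hx (Fin.last m)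
  exact hsum_neg.not_ge (Finset.sum_nonneg fun k _ => (hx_pos k).le)

theorem nonempty_iInter_family_ne (j : Fin (m + 1)) :
    (⋂ (i) (_ : i ≠ j), family m i).Nonempty := by
  induction j using Fin.lastCases with
  | last =>
    refine ⟨1, Set.mem_iInter₂.2 fun i hi => ?_⟩
    induction i using Fin.lastCases with
    | last => exact absurd rfl hi
    | cast i => simp [family]
  | cast k =>
    refine ⟨1 - Pi.single k ((m : ℝ) + 1), Set.mem_iInter₂.2 fun i hi => ?_⟩
    induction i using Fin.lastCases with
    | last => simp [family, Finset.sum_sub_distrib]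
    | cast i =>
      have hik : i ≠ k := fun h => hi (h ▸ rfl)
      simp [family, hik]

theorem nonempty_biInter_family_of_card_eq {I : Finset (Fin (m + 1))} (hI : I.card = m) :
    (⋂ i ∈ I, family m i).Nonempty := by
  obtain ⟨j, -, hj⟩ := Finset.exists_mem_notMem_of_card_lt_card (s := I) (t := Finset.univ)
    (by simp [hI])
  exact (nonempty_iInter_family_ne j).mono
    (Set.biInter_subset_biInter_left fun i hi (hij : i = j) => hj (hij ▸ hi))

end HellyHalfSpace

open HellyHalfSpace in
theorem helly_fails_in_higher_dimension_general (n : ℕ) :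
    ∃ h : Fin (n + 2) → Set (Fin (n + 1) → ℝ),
      (∀ i, IsRatHalfSpace (n + 1) (h i)) ∧
      (∀ I : Finset (Fin (n + 2)), I.card = n + 1 → (⋂ i ∈ I, h i).Nonempty) ∧
      (⋂ i, h i) = ∅ :=
  ⟨family (n + 1), isRatHalfSpace_family, fun _ => nonempty_biInter_family_of_card_eq,
    iInter_family_eq_empty⟩

/-- Failure of the (n+1)-ary Helly property in dimension n+1: there are n+2 rational
open half-spaces in ℝ^{n+1} such that every (n+1)-element subfamily has nonempty
intersection but the whole family has empty intersection. -/
theorem helly_fails_in_higher_dimension (n : ℕ) (hn : 1 ≤ n) :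
    ∃ h : Fin (n + 2) → Set (Fin (n + 1) → ℝ),
      (∀ i, IsRatHalfSpace (n + 1) (h i)) ∧
      (∀ I : Finset (Fin (n + 2)), I.card = n + 1 → (⋂ i ∈ I, h i).Nonempty) ∧
      (⋂ i, h i) = ∅ :=
  helly_fails_in_higher_dimension_general n
end

section
/- Let n ≥ 1 and let a ∈ ROQ(ℝ^n) with a ≠ ∅ and a ≠ ℝ^n. Then both a and its regular-open complement int(ℝ^n ∖ a) are convex if and only if a is a rational open half-space, i.e. a = {x ∈ ℝ^n : c·x < d} for some nonzero c ∈ ℚ^n and d ∈ ℚ. -/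
open FirstOrder

/-!
Separating a convex regular open set `a` from its convex regular-open complement by the
Hahn–Banach theorem shows that `a` is an open half-space `{f < u}` for a real functional `f`.
If moreover `a ∈ ROQ(ℝ^n)`, its frontier, the hyperplane `{f = u}`, is covered by finitely many
rational hyperplanes. Over an infinite field a hyperplane covered by finitely many hyperplanes
lies in one of them, so `f` is proportional to a rational functional and `a` is a rational
half-space.
-/

open Set

namespace Module.Dual

variable {K E : Type*} [Field K] [AddCommGroup E] [Module K E]

theorem exists_eq_smul_of_preimage_singleton_subset {f g : Module.Dual K E} {u d : K} {x₀ : E}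
    (hx₀ : f x₀ = u) (h : f ⁻¹' {u} ⊆ g ⁻¹' {d}) : ∃ μ : K, g = μ • f ∧ d = μ * u := by
  have hd : g x₀ = d := h hx₀
  have hker : LinearMap.ker f ≤ LinearMap.ker g := by
    intro v (hv : f v = 0)
    have : g (x₀ + v) = d := h (by simp [hx₀, hv])
    simpa [hd] using this
  obtain ⟨μ, hμ⟩ := Submodule.mem_span_singleton.1 <| by
    simpa using mem_span_of_iInf_ker_le_ker (ι := Unit) (L := fun _ ↦ f) (by simpa using hker)
  exact ⟨μ, hμ.symm, by rw [← hd, ← hμ, LinearMap.smul_apply, hx₀, smul_eq_mul]⟩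

variable [Infinite K]

theorem exists_preimage_singleton_subset_of_subset_biUnion {ι : Type*} {f : Module.Dual K E}
    {u : K} (hu : ∃ x, f x = u) {g : ι → Module.Dual K E} {d : ι → K} {s : Finset ι}
    (hcover : f ⁻¹' {u} ⊆ ⋃ i ∈ s, g i ⁻¹' {d i}) : ∃ i ∈ s, f ⁻¹' {u} ⊆ g i ⁻¹' {d i} := by
  by_contra! hnot
  obtain ⟨x₀, hx₀⟩ := hu
  -- Homogenize: a point `(x, t)` with `f x = u t`, `t ≠ 0` and `g i x ≠ d i t` for all `i`
  -- rescales to the point `t⁻¹ • x` of the hyperplane `f = u` outside the cover.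
  let F : Module.Dual K (E × K) := f ∘ₗ LinearMap.fst K E K - u • LinearMap.snd K E K
  let G : Option s → Module.Dual K (E × K)
    | none => LinearMap.snd K E K
    | some i => g i ∘ₗ LinearMap.fst K E K - d i • LinearMap.snd K E K
  have hG : ∀ j, ∃ z ∈ LinearMap.ker F, G j z ≠ 0
    | none => ⟨(x₀, 1), by simp [F, hx₀], by simp [G]⟩
    | some i => by
      obtain ⟨x, hx, hgx⟩ := not_subset.1 (hnot i i.2)
      exact ⟨(x, 1), by simpa [F, sub_eq_zero] using hx, by simpa [G, sub_eq_zero] using hgx⟩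
  obtain ⟨⟨x, t⟩, hz, hGz⟩ := exists_forall_mem_ne_zero_of_forall_exists _ G hG
  have ht : t ≠ 0 := hGz none
  have hfx : f x = u * t := by simpa [F, sub_eq_zero] using hz
  have hy : t⁻¹ • x ∈ f ⁻¹' {u} := by
    simp [hfx, mul_comm u, inv_mul_cancel_left₀ ht]
  obtain ⟨i, hi, hgi⟩ := mem_iUnion₂.1 (hcover hy)
  refine hGz (some ⟨i, hi⟩) ?_
  have : g i x = d i * t := by
    simpa [inv_mul_eq_iff_eq_mul₀ ht, mul_comm] using hgi
  simp [G, this]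

end Module.Dual

section HalfSpace

variable {E : Type*} [AddCommGroup E] [Module ℝ E] [TopologicalSpace E] [ContinuousAdd E]
  [ContinuousSMul ℝ E] {f : StrongDual ℝ E}

theorem frontier_preimage_Iio (hf : f ≠ 0) (u : ℝ) : frontier (f ⁻¹' Iio u) = f ⁻¹' {u} := by
  rw [← (f.isOpenMap_of_ne_zero hf).preimage_frontier_eq_frontier_preimage f.continuous,
    frontier_Iio]

theorem interior_compl_preimage_Iio (hf : f ≠ 0) (u : ℝ) :
    interior (f ⁻¹' Iio u)ᶜ = f ⁻¹' Ioi u := by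
  rw [← preimage_compl, compl_Iio,
    ← (f.isOpenMap_of_ne_zero hf).preimage_interior_eq_interior_preimage f.continuous,
    interior_Ici]

end HalfSpace

def IsRegularOpen {X : Type*} [TopologicalSpace X] (s : Set X) : Prop :=
  interior (closure s) = s

namespace IsRegularOpen

variable {X : Type*} [TopologicalSpace X] {s t : Set X}

theorem isOpen (hs : IsRegularOpen s) : IsOpen s := hs ▸ isOpen_interior

theorem of_interior_closure_subset (hs : IsOpen s) (h : interior (closure s) ⊆ s) :
    IsRegularOpen s :=
  h.antisymm hs.subset_interior_closure

theorem empty : IsRegularOpen (∅ : Set X) := by simp [IsRegularOpen]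

theorem univ : IsRegularOpen (univ : Set X) := by simp [IsRegularOpen]

theorem interior_closure (s : Set X) : IsRegularOpen (interior (closure s)) :=
  interior_closure_idem

theorem interior_of_isClosed (hs : IsClosed s) : IsRegularOpen (interior s) :=
  of_interior_closure_subset isOpen_interior <|
    interior_mono (closure_minimal interior_subset hs)

theorem inter (hs : IsRegularOpen s) (ht : IsRegularOpen t) : IsRegularOpen (s ∩ t) :=
  of_interior_closure_subset (hs.isOpen.inter ht.isOpen) fun _ hx ↦
    ⟨hs ▸ interior_mono (closure_mono inter_subset_left) hx,
      ht ▸ interior_mono (closure_mono inter_subset_right) hx⟩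

theorem preimage_Iio {E : Type*} [AddCommGroup E] [Module ℝ E] [TopologicalSpace E]
    [ContinuousAdd E] [ContinuousSMul ℝ E] {f : StrongDual ℝ E} (hf : f ≠ 0) (u : ℝ) :
    IsRegularOpen (f ⁻¹' Iio u) := by
  have hopen := f.isOpenMap_of_ne_zero hf
  rw [IsRegularOpen, ← hopen.preimage_closure_eq_closure_preimage f.continuous, closure_Iio,
    ← hopen.preimage_interior_eq_interior_preimage f.continuous, interior_Iic]

theorem exists_eq_preimage_Iio_of_convex {E : Type*} [AddCommGroup E] [Module ℝ E]
    [TopologicalSpace E] [IsTopologicalAddGroup E] [ContinuousSMul ℝ E] {a : Set E}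
    (ha : IsRegularOpen a) (hconv : Convex ℝ a) (hconv' : Convex ℝ (interior aᶜ))
    (hne : a.Nonempty) (hne_univ : a ≠ Set.univ) :
    ∃ f : StrongDual ℝ E, f ≠ 0 ∧ ∃ u, a = f ⁻¹' Iio u := by
  have hclosure : closure a = (interior aᶜ)ᶜ := closure_eq_compl_interior_compl
  obtain ⟨y, hy⟩ : (interior aᶜ).Nonempty := by
    refine nonempty_iff_ne_empty.2 fun hempty ↦ hne_univ ?_
    rw [← ha, hclosure, hempty, compl_empty, interior_univ]
  obtain ⟨f, u, hfa, hfb⟩ := geometric_hahn_banach_open_open hconv ha.isOpen hconv'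
    isOpen_interior (disjoint_compl_right.mono_right interior_subset)
  obtain ⟨x, hx⟩ := hne
  refine ⟨f, ?_, u, subset_antisymm hfa ?_⟩
  · rintro rfl
    exact lt_asymm (hfa x hx) (hfb y hy)
  · have hsub : f ⁻¹' Iio u ⊆ closure a := by
      rw [hclosure]
      exact fun z hz hzb ↦ lt_asymm hz (hfb z hzb)
    rw [← ha]
    exact interior_maximal hsub (isOpen_Iio.preimage f.continuous)

end IsRegularOpen

section ROQ

variable {n : ℕ}

noncomputable def ratForm (c : Fin n → ℚ) : StrongDual ℝ (Fin n → ℝ) :=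
  ∑ i, (c i : ℝ) • ContinuousLinearMap.proj i

@[simp]
theorem ratForm_apply (c : Fin n → ℚ) (x : Fin n → ℝ) : ratForm c x = ∑ i, (c i : ℝ) * x i := by
  simp [ratForm]

theorem ratForm_neg (c : Fin n → ℚ) : ratForm (-c) = -ratForm c := by
  ext x
  simp [Finset.sum_neg_distrib]

theorem ratForm_ne_zero {c : Fin n → ℚ} (hc : c ≠ 0) : ratForm c ≠ 0 := by
  obtain ⟨i, hi⟩ := Function.ne_iff.1 hc
  intro h
  have hci : ratForm c (Pi.single i 1) = c i := by simp [Pi.single_apply]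
  rw [h, zero_apply] at hci
  exact hi (by exact_mod_cast hci.symm)

theorem isRatHalfSpace_iff {s : Set (Fin n → ℝ)} :
    IsRatHalfSpace n s ↔ ∃ (c : Fin n → ℚ) (d : ℚ), c ≠ 0 ∧ s = ratForm c ⁻¹' Iio (d : ℝ) := by
  simp only [IsRatHalfSpace, ← ratForm_apply]
  rfl

theorem InROQ.isRegularOpen {s : Set (Fin n → ℝ)} (hs : InROQ n s) : IsRegularOpen s := by
  induction hs with
  | bot => exact .empty
  | top => exact .univ
  | halfspace s hs =>
    obtain ⟨c, d, hc, rfl⟩ := isRatHalfSpace_iff.1 hs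
    exact .preimage_Iio (ratForm_ne_zero hc) d
  | inf s t _ _ hs ht => exact hs.inter ht
  | sup s t _ _ _ _ => exact .interior_closure _
  | compl s _ hs => exact .interior_of_isClosed hs.isOpen.isClosed_compl

def FrontierInRatHyperplanes (s : Set (Fin n → ℝ)) : Prop :=
  ∃ I : Finset ((Fin n → ℚ) × ℚ), (∀ p ∈ I, p.1 ≠ 0) ∧
    frontier s ⊆ ⋃ p ∈ I, ratForm p.1 ⁻¹' {(p.2 : ℝ)}

theorem FrontierInRatHyperplanes.of_frontier_subset_union {r s t : Set (Fin n → ℝ)}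
    (hs : FrontierInRatHyperplanes s) (ht : FrontierInRatHyperplanes t)
    (hr : frontier r ⊆ frontier s ∪ frontier t) : FrontierInRatHyperplanes r := by
  classical
  obtain ⟨I, hI, hsI⟩ := hs
  obtain ⟨J, hJ, htJ⟩ := ht
  refine ⟨I ∪ J, fun p hp ↦ (Finset.mem_union.1 hp).elim (hI p) (hJ p), ?_⟩
  rw [Finset.set_biUnion_union]
  exact hr.trans (union_subset_union hsI htJ)

theorem InROQ.frontierInRatHyperplanes {s : Set (Fin n → ℝ)} (hs : InROQ n s) :
    FrontierInRatHyperplanes s := by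
  induction hs with
  | bot => exact ⟨∅, by simp, by simp⟩
  | top => exact ⟨∅, by simp, by simp⟩
  | halfspace s hs =>
    obtain ⟨c, d, hc, rfl⟩ := isRatHalfSpace_iff.1 hs
    exact ⟨{(c, d)}, by simpa using hc, by simp [frontier_preimage_Iio (ratForm_ne_zero hc)]⟩
  | inf s t _ _ hs ht =>
    refine hs.of_frontier_subset_union ht ((frontier_inter_subset s t).trans ?_)
    exact union_subset_union inter_subset_left inter_subset_right
  | sup s t _ _ hs ht =>
    refine hs.of_frontier_subset_union ht <| frontier_interior_subset.trans <|
      frontier_closure_subset.trans <| (frontier_union_subset s t).trans ?_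
    exact union_subset_union inter_subset_left inter_subset_right
  | compl s _ hs =>
    refine hs.of_frontier_subset_union hs ?_
    rw [union_self, ← frontier_compl s]
    exact frontier_interior_subset

theorem isRatHalfSpace_preimage_Iio {f : StrongDual ℝ (Fin n → ℝ)} {u : ℝ} {x₀ : Fin n → ℝ}
    (hx₀ : f x₀ = u) {c : Fin n → ℚ} {d : ℚ} (hc : c ≠ 0)
    (h : f ⁻¹' {u} ⊆ ratForm c ⁻¹' {(d : ℝ)}) : IsRatHalfSpace n (f ⁻¹' Iio u) := by
  obtain ⟨μ, hμ, hd⟩ := Module.Dual.exists_eq_smul_of_preimage_singleton_subset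
    (f := (f : (Fin n → ℝ) →ₗ[ℝ] ℝ)) (g := ratForm c) hx₀ h
  have hμx (x : Fin n → ℝ) : ratForm c x = μ * f x := LinearMap.congr_fun hμ x
  have hμ0 : μ ≠ 0 := by
    rintro rfl
    exact ratForm_ne_zero hc (ContinuousLinearMap.ext fun x ↦ by simpa using hμx x)
  rw [isRatHalfSpace_iff]
  rcases hμ0.lt_or_gt with hneg | hpos
  · refine ⟨-c, -d, neg_ne_zero.2 hc, ?_⟩
    ext x
    simp [ratForm_neg, hμx, hd, mul_lt_mul_left_of_neg hneg]
  · refine ⟨c, d, hc, ?_⟩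
    ext x
    simp [hμx, hd, mul_lt_mul_iff_of_pos_left hpos]

end ROQ

theorem halfspace_iff_convex_with_convex_complement_general (n : ℕ)
    (a : Set (Fin n → ℝ)) (ha : a ∈ ROQ n) (hbot : a ≠ ∅) (htop : a ≠ Set.univ) :
    (Convex ℝ a ∧ Convex ℝ (interior aᶜ)) ↔ IsRatHalfSpace n a := by
  constructor
  · rintro ⟨hconv, hconv'⟩
    obtain ⟨f, hf, u, rfl⟩ := (InROQ.isRegularOpen ha).exists_eq_preimage_Iio_of_convex hconv
      hconv' (nonempty_iff_ne_empty.2 hbot) htop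
    obtain ⟨x₀, hx₀⟩ := LinearMap.surjective (f := (f : (Fin n → ℝ) →ₗ[ℝ] ℝ))
      (fun h ↦ hf (ContinuousLinearMap.coe_inj.1 h)) u
    obtain ⟨I, hI, hcover⟩ := InROQ.frontierInRatHyperplanes ha
    rw [frontier_preimage_Iio hf] at hcover
    obtain ⟨p, hp, hsub⟩ := Module.Dual.exists_preimage_singleton_subset_of_subset_biUnion
      (f := (f : (Fin n → ℝ) →ₗ[ℝ] ℝ)) (g := fun p ↦ (ratForm p.1 : (Fin n → ℝ) →ₗ[ℝ] ℝ))
      (d := fun p ↦ (p.2 : ℝ)) (s := I) ⟨x₀, hx₀⟩ (by simpa only [ContinuousLinearMap.coe_coe])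
    exact isRatHalfSpace_preimage_Iio hx₀ (hI p hp) hsub
  · intro h
    obtain ⟨c, d, hc, rfl⟩ := isRatHalfSpace_iff.1 h
    rw [interior_compl_preimage_Iio (ratForm_ne_zero hc)]
    exact ⟨(convex_Iio _).linear_preimage (ratForm c : (Fin n → ℝ) →ₗ[ℝ] ℝ),
      (convex_Ioi _).linear_preimage (ratForm c : (Fin n → ℝ) →ₗ[ℝ] ℝ)⟩

/-- A nontrivial region of ROQ(ℝ^n) is a rational open half-space if and only if both
it and its regular-open complement int(ℝ^n ∖ a) are convex. -/
theorem halfspace_iff_convex_with_convex_complement (n : ℕ) (hn : 1 ≤ n)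
    (a : Set (Fin n → ℝ)) (ha : a ∈ ROQ n) (hbot : a ≠ ∅) (htop : a ≠ Set.univ) :
    (Convex ℝ a ∧ Convex ℝ (interior aᶜ)) ↔ IsRatHalfSpace n a :=
  halfspace_iff_convex_with_convex_complement_general n a ha hbot htop
end

section
/- Let h_i = {x ∈ ℝ³ : u_i·x < d_i} (i = 1, 2, 3) be open half-spaces in ℝ³ whose normal vectors u_1, u_2, u_3 are pairwise linearly independent (so each pair of bounding planes meets in a line). Then all eight sets ε_1h_1 ∩ ε_2h_2 ∩ ε_3h_3, where each ε_ih_i is either h_i or its opposite open half-space -h_i = int(ℝ³ ∖ h_i), are nonempty if and only if u_1, u_2, u_3 are linearly independent (equivalently, the three bounding planes meet in a single point, forming a corner). -/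
/-!
If the normals are linearly independent, `x ↦ (uᵢ ⬝ᵥ x)ᵢ` is onto, so every sign pattern of
`uᵢ ⬝ᵥ x - dᵢ` is attained. Otherwise there is a relation `∑ cᵢ uᵢ = 0`, and pairwise
independence forces every `cᵢ ≠ 0`. Then `∑ cᵢ (dᵢ - uᵢ ⬝ᵥ x) = ∑ cᵢ dᵢ` does not depend on `x`,
yet it is negative on the cell where every term is negative and positive on the opposite cell.
-/

open Matrix Finset

theorem ContinuousLinearMap.interior_compl_setOf_lt {E : Type*} [AddCommGroup E]
    [TopologicalSpace E] [ContinuousAdd E] [Module ℝ E] [ContinuousSMul ℝ E]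
    (f : StrongDual ℝ E) (hf : f ≠ 0) (d : ℝ) :
    interior {x | f x < d}ᶜ = {x | d < f x} := by
  have hpre : {x | f x < d}ᶜ = f ⁻¹' Set.Ici d := by ext; simp
  rw [hpre, ← (f.isOpenMap_of_ne_zero hf).preimage_interior_eq_interior_preimage f.continuous,
    interior_Ici]
  rfl

theorem interior_compl_setOf_dotProduct_lt {m : Type*} [Fintype m] {a : m → ℝ} (ha : a ≠ 0)
    (d : ℝ) : interior {x : m → ℝ | a ⬝ᵥ x < d}ᶜ = {x | d < a ⬝ᵥ x} := by
  let f : StrongDual ℝ (m → ℝ) := LinearMap.toContinuousLinearMap (dotProductBilin ℝ ℝ a)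
  have hf : f ≠ 0 := fun h0 => ha (dotProduct_self_eq_zero.mp (by simpa [f] using congr($h0 a)))
  simpa [f] using f.interior_compl_setOf_lt hf d

section SignedHalfSpace

variable {ι m : Type*} [Fintype m]

/-- The paper's `εh` for `h = {x | a ⬝ᵥ x < d}`, with `true` for `+h` and `false` for `-h`. -/
def signedHalfSpace (a : m → ℝ) (d : ℝ) : Bool → Set (m → ℝ)
  | true => {x | a ⬝ᵥ x < d}
  | false => {x | d < a ⬝ᵥ x}

theorem ite_interior_compl_eq_signedHalfSpace {a : m → ℝ} (ha : a ≠ 0) (d : ℝ) (b : Bool) :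
    (if b then {x | a ⬝ᵥ x < d} else interior {x | a ⬝ᵥ x < d}ᶜ) = signedHalfSpace a d b := by
  cases b
  · exact interior_compl_setOf_dotProduct_lt ha d
  · rfl

theorem iInter_signedHalfSpace_nonempty [DecidableEq m] {u : m → m → ℝ}
    (hu : LinearIndependent ℝ u) (d : m → ℝ) (ε : m → Bool) :
    (⋂ i, signedHalfSpace (u i) (d i) (ε i)).Nonempty := by
  have hsurj : Function.Surjective (of u).mulVec :=
    mulVec_surjective_iff_isUnit.mpr (linearIndependent_rows_iff_isUnit.mp hu)
  obtain ⟨x, hx⟩ := hsurj fun i => if ε i then d i - 1 else d i + 1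
  refine ⟨x, Set.mem_iInter.mpr fun i => ?_⟩
  have hxi : u i ⬝ᵥ x = if ε i then d i - 1 else d i + 1 := congr_fun hx i
  cases hεi : ε i <;> simp [signedHalfSpace, hxi, hεi]

theorem mul_sub_dotProduct_neg_of_mem_signedHalfSpace {a x : m → ℝ} {c d : ℝ} (hc : c ≠ 0)
    (hx : x ∈ signedHalfSpace a d (decide (c < 0))) : c * (d - a ⬝ᵥ x) < 0 := by
  rcases hc.lt_or_gt with hc | hc
  · simp only [signedHalfSpace, hc, decide_true, Set.mem_ofPred_eq] at hx
    exact mul_neg_of_neg_of_pos hc (by linarith)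
  · simp only [signedHalfSpace, not_lt.mpr hc.le, decide_false, Set.mem_ofPred_eq] at hx
    exact mul_neg_of_pos_of_neg hc (by linarith)

variable [Fintype ι] [Nonempty ι]

theorem sum_mul_neg_of_mem_iInter_signedHalfSpace {u : ι → m → ℝ} {c : ι → ℝ}
    (hc : ∑ i, c i • u i = 0) (hc0 : ∀ i, c i ≠ 0) {d : ι → ℝ} {x : m → ℝ}
    (hx : x ∈ ⋂ i, signedHalfSpace (u i) (d i) (decide (c i < 0))) : ∑ i, c i * d i < 0 := by
  have hconst : ∑ i, c i * (d i - u i ⬝ᵥ x) = ∑ i, c i * d i := by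
    simp only [mul_sub, sum_sub_distrib, ← smul_eq_mul (c _) (u _ ⬝ᵥ x), ← smul_dotProduct,
      ← sum_dotProduct, hc, zero_dotProduct, sub_zero]
  rw [← hconst]
  exact sum_neg (fun i _ => mul_sub_dotProduct_neg_of_mem_signedHalfSpace (hc0 i)
    (Set.mem_iInter.mp hx i)) univ_nonempty

theorem exists_iInter_signedHalfSpace_eq_empty {u : ι → m → ℝ} {c : ι → ℝ}
    (hc : ∑ i, c i • u i = 0) (hc0 : ∀ i, c i ≠ 0) (d : ι → ℝ) :
    ∃ ε : ι → Bool, ⋂ i, signedHalfSpace (u i) (d i) (ε i) = ∅ := by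
  by_contra! hne
  obtain ⟨x, hx⟩ := hne fun i => decide (c i < 0)
  obtain ⟨y, hy⟩ := hne fun i => decide (-c i < 0)
  have hneg : ∑ i, -c i • u i = 0 := by simp [neg_smul, sum_neg_distrib, hc]
  have h₁ := sum_mul_neg_of_mem_iInter_signedHalfSpace hc hc0 hx
  have h₂ := sum_mul_neg_of_mem_iInter_signedHalfSpace hneg (fun i => neg_ne_zero.mpr (hc0 i)) hy
  simp only [neg_mul, sum_neg_distrib] at h₂
  linarith

end SignedHalfSpace

theorem coeff_ne_zero_of_pairwise_linearIndependent {R M : Type*} [Semiring R]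
    [AddCommMonoid M] [Module R M] {u : Fin 3 → M}
    (hpair : ∀ i j : Fin 3, i ≠ j → LinearIndependent R ![u i, u j]) {c : Fin 3 → R}
    (hc : ∑ i, c i • u i = 0) (hc0 : c ≠ 0) : ∀ i, c i ≠ 0 := by
  rw [Fin.sum_univ_three] at hc
  refine fun i hci => hc0 (funext fun j => ?_)
  match i with
  | 0 =>
    obtain ⟨h₁, h₂⟩ := (hpair 1 2 (by decide)).eq_zero_of_pair (by simpa [hci] using hc)
    fin_cases j <;> assumption
  | 1 =>
    obtain ⟨h₀, h₂⟩ := (hpair 0 2 (by decide)).eq_zero_of_pair (by simpa [hci] using hc)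
    fin_cases j <;> assumption
  | 2 =>
    obtain ⟨h₀, h₁⟩ := (hpair 0 1 (by decide)).eq_zero_of_pair (by simpa [hci] using hc)
    fin_cases j <;> assumption

/-- Three open half-spaces in ℝ³ whose normal vectors are pairwise linearly independent
form a corner (all eight octant intersections nonempty) if and only if the three normal
vectors are linearly independent. -/
theorem corner_iff_linearIndependent
    (u : Fin 3 → (Fin 3 → ℝ)) (d : Fin 3 → ℝ)
    (hpair : ∀ i j : Fin 3, i ≠ j → LinearIndependent ℝ ![u i, u j])
    (h : Fin 3 → Set (Fin 3 → ℝ))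
    (hh : ∀ i, h i = {x : Fin 3 → ℝ | (∑ k, u i k * x k) < d i}) :
    (∀ ε : Fin 3 → Bool,
        (⋂ i, if ε i then h i else interior (h i)ᶜ).Nonempty) ↔
      LinearIndependent ℝ u := by
  obtain rfl : h = fun i => {x | u i ⬝ᵥ x < d i} := funext hh
  have hu : ∀ i, u i ≠ 0 := fun i =>
    let ⟨j, hji⟩ := exists_ne i
    (hpair i j hji.symm).ne_zero 0
  simp only [ite_interior_compl_eq_signedHalfSpace (hu _)]
  refine ⟨fun hall => ?_, fun hli => iInter_signedHalfSpace_nonempty hli d⟩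
  by_contra hdep
  obtain ⟨c, hc, i, hci⟩ := Fintype.not_linearIndependent_iff.mp hdep
  obtain ⟨ε, hε⟩ := exists_iInter_signedHalfSpace_eq_empty hc
    (coeff_ne_zero_of_pairwise_linearIndependent hpair hc (Function.ne_iff.mpr ⟨i, hci⟩)) d
  exact (hall ε).ne_empty hε
end

section
/- (Correctness of the geometric addition construction.) In ℝ², let l_1 and l_3 be distinct lines meeting at the point O, let m be a line parallel to l_3 with m ≠ l_3, and let A, B, C be points on l_3. Let J be the unique point of l_1 ∩ m, let l_A be a line through A that is parallel to or equal to l_1, let l_B be the line through B and J, let M be the unique point of l_A ∩ m, and let l_C be a line through C that is parallel to or equal to l_B and that passes through M. Then C − O = (A − O) + (B − O), i.e. C = A + B − O as vectors in ℝ². -/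
/-!
Both steps of the construction are parallelograms. `O, A, M, J` has sides along the directions of
`l₃` (`OA`, `JM`) and of `l₁` (`OJ`, `AM`), so `M - J = A - O`; `B, C, M, J` has sides along the
directions of `l₃` (`BC`, `JM`) and of `lB` (`BJ`, `CM`), so `C - B = M - J`. The directions of
`lB` and `l₃` differ because `J ∉ l₃`, as `m` is a parallel of `l₃` distinct from it.
-/

/-- A line in the affine plane ℝ²: a one-dimensional affine subspace. -/
def IsLine2 (l : AffineSubspace ℝ (Fin 2 → ℝ)) : Prop :=
  Module.finrank ℝ l.direction = 1

open Module

theorem Submodule.disjoint_of_finrank_eq_one {K V : Type*} [DivisionRing K] [AddCommGroup V]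
    [Module K V] {W₁ W₂ : Submodule K V} (h₁ : finrank K W₁ = 1) (h₂ : finrank K W₂ = 1)
    (hne : W₁ ≠ W₂) : Disjoint W₁ W₂ := by
  refine Submodule.disjoint_def.mpr fun v hv₁ hv₂ => ?_
  by_contra hv
  have : FiniteDimensional K W₁ := Module.finite_of_finrank_pos (by omega)
  have : FiniteDimensional K W₂ := Module.finite_of_finrank_pos (by omega)
  have hspan : finrank K (K ∙ v) = 1 := finrank_span_singleton hv
  have e₁ : (K ∙ v) = W₁ := Submodule.eq_of_le_of_finrank_eq
    ((Submodule.span_singleton_le_iff_mem v W₁).mpr hv₁) (by rw [hspan, h₁])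
  have e₂ : (K ∙ v) = W₂ := Submodule.eq_of_le_of_finrank_eq
    ((Submodule.span_singleton_le_iff_mem v W₂).mpr hv₂) (by rw [hspan, h₂])
  exact hne (e₁.symm.trans e₂)

namespace AffineSubspace

variable {K V P : Type*} [DivisionRing K] [AddCommGroup V] [Module K V] [AddTorsor V P]

theorem disjoint_direction_of_ne_of_mem {s t : AffineSubspace K P}
    (hs : finrank K s.direction = 1) (ht : finrank K t.direction = 1) (hne : s ≠ t)
    {p : P} (hps : p ∈ s) (hpt : p ∈ t) : Disjoint s.direction t.direction :=
  Submodule.disjoint_of_finrank_eq_one hs ht fun hd => hne (ext_of_direction_eq hd ⟨p, hps, hpt⟩)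

theorem not_mem_of_parallel_of_ne {s t : AffineSubspace K P} (hpar : s.Parallel t) (hne : s ≠ t)
    {p : P} (hp : p ∈ s) : p ∉ t := fun hpt =>
  hne (ext_of_direction_eq hpar.direction_eq ⟨p, hp, hpt⟩)

end AffineSubspace

theorem vsub_eq_vsub_of_parallelogram {K V P : Type*} [Ring K] [AddCommGroup V] [Module K V]
    [AddTorsor V P] {D E : Submodule K V} (hDE : Disjoint D E) {p q r s : P}
    (hpq : q -ᵥ p ∈ D) (hrs : s -ᵥ r ∈ D) (hpr : r -ᵥ p ∈ E) (hqs : s -ᵥ q ∈ E) :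
    q -ᵥ p = s -ᵥ r := by
  have hD : q -ᵥ p - (s -ᵥ r) ∈ D := D.sub_mem hpq hrs
  have hE : q -ᵥ p - (s -ᵥ r) ∈ E := by
    rw [vsub_sub_vsub_comm, ← neg_vsub_eq_vsub_rev s q, ← neg_vsub_eq_vsub_rev r p]
    exact E.sub_mem (E.neg_mem hqs) (E.neg_mem hpr)
  exact sub_eq_zero.mp (Submodule.disjoint_def.mp hDE _ hD hE)

theorem geometric_addition_correct_general
    (l₁ l₃ m lA lB lC : AffineSubspace ℝ (Fin 2 → ℝ))
    (hl₁ : IsLine2 l₁) (hl₃ : IsLine2 l₃)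
    (hlB : IsLine2 lB)
    (O A B C J M : Fin 2 → ℝ)
    -- (a) l₁ and l₃ are distinct lines meeting at O
    (hne : l₁ ≠ l₃) (hO₁ : O ∈ l₁) (hO₃ : O ∈ l₃)
    -- (b) m is parallel to l₃ and distinct from it
    (hpar : AffineSubspace.Parallel m l₃) (hmne : m ≠ l₃)
    -- A, B, C lie on l₃
    (hA : A ∈ l₃) (hB : B ∈ l₃) (hC : C ∈ l₃)
    -- J is the unique point of l₁ ∩ m
    (hJ : (l₁ : Set (Fin 2 → ℝ)) ∩ m = {J})
    -- (c) lA passes through A and is parallel to or equal to l₁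
    (hAlA : A ∈ lA) (hlAl₁ : AffineSubspace.Parallel lA l₁)
    -- (d) lB passes through B and J
    (hBlB : B ∈ lB) (hJlB : J ∈ lB)
    -- M is the unique point of lA ∩ m
    (hM : (lA : Set (Fin 2 → ℝ)) ∩ m = {M})
    -- (e) lC passes through C, is parallel to or equal to lB, and passes through M
    (hClC : C ∈ lC) (hlClB : AffineSubspace.Parallel lC lB) (hMlC : M ∈ lC) :
    C = A + B - O := by
  obtain ⟨hJ₁, hJm⟩ : J ∈ l₁ ∧ J ∈ m := hJ.symm.subset rfl
  obtain ⟨hMA, hMm⟩ : M ∈ lA ∧ M ∈ m := hM.symm.subset rfl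
  have hJM : M -ᵥ J ∈ l₃.direction := hpar.direction_eq ▸ m.vsub_mem_direction hMm hJm
  have hlBl₃ : lB ≠ l₃ := fun h =>
    AffineSubspace.not_mem_of_parallel_of_ne hpar hmne hJm (h ▸ hJlB)
  have hOAMJ : A -ᵥ O = M -ᵥ J := vsub_eq_vsub_of_parallelogram
    (AffineSubspace.disjoint_direction_of_ne_of_mem hl₃ hl₁ hne.symm hO₃ hO₁)
    (l₃.vsub_mem_direction hA hO₃) hJM (l₁.vsub_mem_direction hJ₁ hO₁)
    (hlAl₁.direction_eq ▸ lA.vsub_mem_direction hMA hAlA)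
  have hBCMJ : C -ᵥ B = M -ᵥ J := vsub_eq_vsub_of_parallelogram
    (AffineSubspace.disjoint_direction_of_ne_of_mem hl₃ hlB hlBl₃.symm hB hBlB)
    (l₃.vsub_mem_direction hC hB) hJM (lB.vsub_mem_direction hJlB hBlB)
    (hlClB.direction_eq ▸ lC.vsub_mem_direction hMlC hClC)
  rw [vsub_eq_sub, vsub_eq_sub] at hOAMJ hBCMJ
  linear_combination (norm := abel) hBCMJ - hOAMJ

/-- Correctness of the geometric addition construction: with the configuration of lines
described below, the point C on l₃ satisfies OC = OA + OB, i.e. C = A + B - O. -/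
theorem geometric_addition_correct
    (l₁ l₃ m lA lB lC : AffineSubspace ℝ (Fin 2 → ℝ))
    (hl₁ : IsLine2 l₁) (hl₃ : IsLine2 l₃) (hm : IsLine2 m)
    (hlA : IsLine2 lA) (hlB : IsLine2 lB) (hlC : IsLine2 lC)
    (O A B C J M : Fin 2 → ℝ)
    -- (a) l₁ and l₃ are distinct lines meeting at O
    (hne : l₁ ≠ l₃) (hO₁ : O ∈ l₁) (hO₃ : O ∈ l₃)
    -- (b) m is parallel to l₃ and distinct from it
    (hpar : AffineSubspace.Parallel m l₃) (hmne : m ≠ l₃)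
    -- A, B, C lie on l₃
    (hA : A ∈ l₃) (hB : B ∈ l₃) (hC : C ∈ l₃)
    -- J is the unique point of l₁ ∩ m
    (hJ : (l₁ : Set (Fin 2 → ℝ)) ∩ m = {J})
    -- (c) lA passes through A and is parallel to or equal to l₁
    (hAlA : A ∈ lA) (hlAl₁ : AffineSubspace.Parallel lA l₁)
    -- (d) lB passes through B and J
    (hBlB : B ∈ lB) (hJlB : J ∈ lB)
    -- M is the unique point of lA ∩ m
    (hM : (lA : Set (Fin 2 → ℝ)) ∩ m = {M})
    -- (e) lC passes through C, is parallel to or equal to lB, and passes through M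
    (hClC : C ∈ lC) (hlClB : AffineSubspace.Parallel lC lB) (hMlC : M ∈ lC) :
    C = A + B - O :=
  geometric_addition_correct_general l₁ l₃ m lA lB lC hl₁ hl₃ hlB O A B C J M hne hO₁ hO₃ hpar hmne
    hA hB hC hJ hAlA hlAl₁ hBlB hJlB hM hClC hlClB hMlC
end

section
/- (Correctness of the geometric multiplication construction.) In ℝ², let l_1 and l_3 be distinct lines meeting at the point O, let I be a point of l_3 with I ≠ O, let J be a point of l_1 with J ≠ O, and let l_2 be the line through I and J. Let A, B, C be points on l_3, let l_A be a line through A that is parallel to or equal to l_2, let l_B be the line through B and J, let M be the unique point of l_A ∩ l_1, and let l_C be a line through C that is parallel to or equal to l_B and passes through M. Writing A − O = α(I − O), B − O = β(I − O) and C − O = γ(I − O) for real scalars α, β, γ, one has γ = α·β. -/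
open Module

theorem Submodule.exists_smul_eq_of_finrank_eq_one {k V : Type*} [Field k] [AddCommGroup V]
    [Module k V] {S : Submodule k V} (hS : finrank k S = 1) {w v : V} (hw : w ∈ S)
    (hw0 : w ≠ 0) (hv : v ∈ S) : ∃ t : k, t • w = v :=
  mem_span_singleton.1 (eq_span_singleton_of_mem_of_finrank_eq_one hS hw hw0 ▸ hv)

theorem AffineSubspace.linearIndependent_vsub_pair_of_ne {k V P : Type*} [Field k]
    [AddCommGroup V] [Module k V] [AddTorsor V P] {s₁ s₂ : AffineSubspace k P}
    (h₁ : finrank k s₁.direction = 1) (h₂ : finrank k s₂.direction = 1) (hne : s₁ ≠ s₂)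
    {p q₁ q₂ : P} (hp₁ : p ∈ s₁) (hp₂ : p ∈ s₂) (hq₁ : q₁ ∈ s₁) (hq₂ : q₂ ∈ s₂)
    (hq₁p : q₁ ≠ p) (hq₂p : q₂ ≠ p) :
    LinearIndependent k ![q₁ -ᵥ p, q₂ -ᵥ p] := by
  rw [LinearIndependent.pair_iff' (vsub_ne_zero.2 hq₁p)]
  intro a ha
  have hw : q₂ -ᵥ p ∈ s₁.direction := ha ▸ s₁.direction.smul_mem a (vsub_mem_direction hq₁ hp₁)
  have hw0 : q₂ -ᵥ p ≠ 0 := vsub_ne_zero.2 hq₂p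
  refine hne (ext_of_direction_eq ?_ ⟨p, hp₁, hp₂⟩)
  rw [eq_span_singleton_of_mem_of_finrank_eq_one h₁ hw hw0,
    eq_span_singleton_of_mem_of_finrank_eq_one h₂ (vsub_mem_direction hq₂ hp₂) hw0]

namespace LinearIndependent

variable {R M : Type*} [CommRing R] [AddCommGroup M] [Module R M] {u v : M}

theorem sub_smul_ne_zero [Nontrivial R] (h : LinearIndependent R ![u, v]) (b : R) :
    u - b • v ≠ 0 := by
  intro h0
  simpa using (pair_iff.1 h 1 (-b) (by rw [← h0]; module)).1

theorem eq_of_smul_sub_smul_eq_smul_sub (h : LinearIndependent R ![u, v]) {s a t : R}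
    (hst : s • u - a • v = t • (u - v)) : s = a := by
  obtain ⟨hs, ha⟩ := pair_iff.1 h (s - t) (t - a) (by linear_combination (norm := module) hst)
  linear_combination hs + ha

theorem eq_mul_of_smul_sub_smul_eq_smul_sub_smul (h : LinearIndependent R ![u, v])
    {a b c r : R} (hr : c • v - a • u = r • (u - b • v)) : c = a * b := by
  obtain ⟨ha, hc⟩ := pair_iff.1 h (r + a) (-(r * b) - c)
    (by linear_combination (norm := module) -hr)
  linear_combination -hc - b * ha

end LinearIndependent

theorem geometric_multiplication_correct_general
    (l₁ l₂ l₃ lA lB lC : AffineSubspace ℝ (Fin 2 → ℝ))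
    (hl₁ : IsLine2 l₁) (hl₂ : IsLine2 l₂) (hl₃ : IsLine2 l₃)
    (hlB : IsLine2 lB)
    (O I J A B C M : Fin 2 → ℝ) (α β γ : ℝ)
    -- (a) l₁ and l₃ are distinct lines meeting at O; I on l₃, J on l₁, and l₂ passes
    -- through I and J
    (hne : l₁ ≠ l₃) (hO₁ : O ∈ l₁) (hO₃ : O ∈ l₃)
    (hI : I ∈ l₃) (hIO : I ≠ O) (hJ : J ∈ l₁) (hJO : J ≠ O)
    (hIl₂ : I ∈ l₂) (hJl₂ : J ∈ l₂)
    -- (b) lA passes through A and is parallel to or equal to l₂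
    (hAlA : A ∈ lA) (hlAl₂ : AffineSubspace.Parallel lA l₂)
    -- (c) lB passes through B and J
    (hBlB : B ∈ lB) (hJlB : J ∈ lB)
    -- M is the unique point of lA ∩ l₁
    (hM : (lA : Set (Fin 2 → ℝ)) ∩ l₁ = {M})
    -- (d) lC passes through C, is parallel to or equal to lB, and passes through M
    (hClC : C ∈ lC) (hlClB : AffineSubspace.Parallel lC lB) (hMlC : M ∈ lC)
    -- coordinates of A, B, C on l₃ with origin O and unit I
    (hα : A - O = α • (I - O)) (hβ : B - O = β • (I - O)) (hγ : C - O = γ • (I - O)) :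
    γ = α * β := by
  have hind : LinearIndependent ℝ ![J - O, I - O] :=
    AffineSubspace.linearIndependent_vsub_pair_of_ne hl₁ hl₃ hne hO₁ hO₃ hJ hI hJO hIO
  obtain ⟨hMlA, hMl₁⟩ : M ∈ lA ∧ M ∈ l₁ := (Set.ext_iff.1 hM M).2 rfl
  obtain ⟨s, hs⟩ : ∃ s : ℝ, s • (J - O) = M - O :=
    Submodule.exists_smul_eq_of_finrank_eq_one hl₁ (AffineSubspace.vsub_mem_direction hJ hO₁)
      (sub_ne_zero.2 hJO) (AffineSubspace.vsub_mem_direction hMl₁ hO₁)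
  obtain ⟨t, ht⟩ : ∃ t : ℝ, t • (J - I) = M - A :=
    Submodule.exists_smul_eq_of_finrank_eq_one hl₂ (AffineSubspace.vsub_mem_direction hJl₂ hIl₂)
      (by simpa using hind.sub_smul_ne_zero 1)
      (hlAl₂.direction_eq ▸ AffineSubspace.vsub_mem_direction hMlA hAlA)
  have hsα : s = α := hind.eq_of_smul_sub_smul_eq_smul_sub (t := t)
    (by linear_combination (norm := module) hs - ht + hα)
  obtain ⟨r, hr⟩ : ∃ r : ℝ, r • (J - B) = C - M :=
    Submodule.exists_smul_eq_of_finrank_eq_one hlB (AffineSubspace.vsub_mem_direction hJlB hBlB)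
      (by rw [show J - B = J - O - β • (I - O) by rw [← hβ]; abel]
          exact hind.sub_smul_ne_zero β)
      (hlClB.direction_eq ▸ AffineSubspace.vsub_mem_direction hClC hMlC)
  exact hind.eq_mul_of_smul_sub_smul_eq_smul_sub_smul (r := r)
    (by linear_combination (norm := module) -hγ + hsα • (J - O) - hs - hr - r • hβ)

/-- Correctness of the geometric multiplication construction: with the configuration of
lines described below and coordinates α, β, γ of A, B, C on l₃ relative to the origin O
and unit I, one has γ = α·β, i.e. OC = OA · OB. -/
theorem geometric_multiplication_correct
    (l₁ l₂ l₃ lA lB lC : AffineSubspace ℝ (Fin 2 → ℝ))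
    (hl₁ : IsLine2 l₁) (hl₂ : IsLine2 l₂) (hl₃ : IsLine2 l₃)
    (hlA : IsLine2 lA) (hlB : IsLine2 lB) (hlC : IsLine2 lC)
    (O I J A B C M : Fin 2 → ℝ) (α β γ : ℝ)
    -- (a) l₁ and l₃ are distinct lines meeting at O; I on l₃, J on l₁, and l₂ passes
    -- through I and J
    (hne : l₁ ≠ l₃) (hO₁ : O ∈ l₁) (hO₃ : O ∈ l₃)
    (hI : I ∈ l₃) (hIO : I ≠ O) (hJ : J ∈ l₁) (hJO : J ≠ O)
    (hIl₂ : I ∈ l₂) (hJl₂ : J ∈ l₂)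
    -- A, B, C lie on l₃
    (hA : A ∈ l₃) (hB : B ∈ l₃) (hC : C ∈ l₃)
    -- (b) lA passes through A and is parallel to or equal to l₂
    (hAlA : A ∈ lA) (hlAl₂ : AffineSubspace.Parallel lA l₂)
    -- (c) lB passes through B and J
    (hBlB : B ∈ lB) (hJlB : J ∈ lB)
    -- M is the unique point of lA ∩ l₁
    (hM : (lA : Set (Fin 2 → ℝ)) ∩ l₁ = {M})
    -- (d) lC passes through C, is parallel to or equal to lB, and passes through M
    (hClC : C ∈ lC) (hlClB : AffineSubspace.Parallel lC lB) (hMlC : M ∈ lC)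
    -- coordinates of A, B, C on l₃ with origin O and unit I
    (hα : A - O = α • (I - O)) (hβ : B - O = β • (I - O)) (hγ : C - O = γ • (I - O)) :
    γ = α * β :=
  geometric_multiplication_correct_general l₁ l₂ l₃ lA lB lC hl₁ hl₂ hl₃ hlB O I J A B C M α β γ hne
    hO₁ hO₃ hI hIO hJ hJO hIl₂ hJl₂ hAlA hlAl₂ hBlB hJlB hM hClC hlClB hMlC hα hβ hγ
end
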